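/- arXiv:2602.11454 — 6 statements merged into one kernel-verified Lean document; each statement's English description precedes it below -/
import Mathlib

section
/- Let u, v, w be unit-length vectors in a real inner product space. Then sin²(u,w) ≤ 2·(sin²(u,v) + sin²(v,w)). -/
/-- For unit vectors `a, b`, `sin(a,b) := √(1 - ⟨a,b⟩²)`. Then
`sin²(u,w) ≤ 2·(sin²(u,v) + sin²(v,w))`. -/
theorem stmt0 {E : Type*} [NormedAddCommGroup E] [InnerProductSpace ℝ E]
    (u v w : E) (hu : ‖u‖ = 1) (hv : ‖v‖ = 1) (hw : ‖w‖ = 1) :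
    Real.sqrt (1 - (inner ℝ u w : ℝ) ^ 2) ^ 2 ≤
      2 * (Real.sqrt (1 - (inner ℝ u v : ℝ) ^ 2) ^ 2 +
           Real.sqrt (1 - (inner ℝ v w : ℝ) ^ 2) ^ 2) := by
  set a : ℝ := inner ℝ u v with ha'
  set b : ℝ := inner ℝ v w with hb'
  set c : ℝ := inner ℝ u w with hc'
  have huu : (inner ℝ u u : ℝ) = 1 := by
    rw [real_inner_self_eq_norm_sq, hu]; norm_num
  have hvv : (inner ℝ v v : ℝ) = 1 := by
    rw [real_inner_self_eq_norm_sq, hv]; norm_num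
  have hww : (inner ℝ w w : ℝ) = 1 := by
    rw [real_inner_self_eq_norm_sq, hw]; norm_num
  have ha2 : a ^ 2 ≤ 1 := by
    have := abs_real_inner_le_norm u v
    rw [hu, hv] at this
    nlinarith [abs_nonneg a, sq_abs a]
  have hb2 : b ^ 2 ≤ 1 := by
    have := abs_real_inner_le_norm v w
    rw [hv, hw] at this
    nlinarith [abs_nonneg b, sq_abs b]
  have hc2 : c ^ 2 ≤ 1 := by
    have := abs_real_inner_le_norm u w
    rw [hu, hw] at this
    nlinarith [abs_nonneg c, sq_abs c]
  have key : (c - a * b) ^ 2 ≤ (1 - a ^ 2) * (1 - b ^ 2) := by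
    have h := real_inner_mul_inner_self_le (u - a • v) (w - b • v)
    simp only [inner_sub_left, inner_sub_right, real_inner_smul_left,
      real_inner_smul_right, huu, hvv, hww] at h
    have e1 : (inner ℝ v u : ℝ) = a := (real_inner_comm u v).trans ha'.symm
    have e2 : (inner ℝ w v : ℝ) = b := (real_inner_comm v w).trans hb'.symm
    have e3 : (inner ℝ w u : ℝ) = c := (real_inner_comm u w).trans hc'.symm
    simp only [e1, e2, e3, ← ha', ← hb', ← hc'] at h
    nlinarith [h]
  rw [Real.sq_sqrt (by linarith : (0:ℝ) ≤ 1 - c ^ 2),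
      Real.sq_sqrt (by linarith : (0:ℝ) ≤ 1 - a ^ 2),
      Real.sq_sqrt (by linarith : (0:ℝ) ≤ 1 - b ^ 2)]
  nlinarith [key, sq_nonneg (a^2 + b^2 - 2), sq_nonneg (a*b - c), sq_nonneg (a + b), sq_nonneg (a - b), sq_nonneg (a*b + c), sq_nonneg (a^2 - b^2)]
end

section
/- Let Σ̄² be a d×d positive semidefinite matrix with eigenvalues σ̄₁² ≥ σ̄₂² ≥ … ≥ σ̄_d² satisfying ∑_{i=1}^d σ̄_i² = 1, and suppose the eigengap κ̄ := (σ̄₁² − σ̄₂²)/σ̄₁² is positive. Let A ∈ ℝ^{n×d} be any matrix with ‖AᵀA − n·Σ̄²‖₂ ≤ K₃ · max{√n · σ̄₁, 1} for some K₃ > 0, let σ₁² ≥ σ₂² be the two largest eigenvalues of AᵀA, and set κ := (σ₁² − σ₂²)/σ₁². If n ≥ max{ d, (2K₃)²·d, (4K₃)²·d/κ̄² }, then κ ≥ κ̄/3 and σ₁² ≥ (1/2)·n·σ̄₁². -/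
open Matrix

/-- The spectral norm (largest singular value) of a square real matrix. -/
noncomputable def matrixSpectralNorm {d : ℕ} (X : Matrix (Fin d) (Fin d) ℝ) : ℝ :=
  ‖Matrix.toEuclideanCLM (𝕜 := ℝ) X‖

open scoped RealInnerProductSpace

variable {m : ℕ}

lemma clm_eigBasis (M : Matrix (Fin m) (Fin m) ℝ) (hM : M.IsHermitian) (i : Fin m) :
    Matrix.toEuclideanCLM (𝕜 := ℝ) M (hM.eigenvectorBasis i)
      = hM.eigenvalues i • hM.eigenvectorBasis i := by
  apply (WithLp.equiv 2 (Fin m → ℝ)).injective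
  rw [WithLp.equiv_apply, Matrix.ofLp_toEuclideanCLM]
  simpa using hM.mulVec_eigenvectorBasis i

lemma quad_expand (M : Matrix (Fin m) (Fin m) ℝ) (hM : M.IsHermitian)
    (x : EuclideanSpace ℝ (Fin m)) :
    ⟪x, Matrix.toEuclideanCLM (𝕜 := ℝ) M x⟫ =
      ∑ i, hM.eigenvalues i * ⟪hM.eigenvectorBasis i, x⟫ ^ 2 := by
  have hsym : (Matrix.toEuclideanLin M).IsSymmetric :=
    (Matrix.isHermitian_iff_isSymmetric).1 hM
  have key := (hM.eigenvectorBasis).sum_inner_mul_inner x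
    (Matrix.toEuclideanCLM (𝕜 := ℝ) M x)
  rw [← key]
  apply Finset.sum_congr rfl
  intro i _
  have h1 : ⟪hM.eigenvectorBasis i, Matrix.toEuclideanCLM (𝕜 := ℝ) M x⟫
      = hM.eigenvalues i * ⟪hM.eigenvectorBasis i, x⟫ := by
    have hsym' : ∀ a b : EuclideanSpace ℝ (Fin m),
        ⟪Matrix.toEuclideanCLM (𝕜 := ℝ) M a, b⟫ = ⟪a, Matrix.toEuclideanCLM (𝕜 := ℝ) M b⟫ :=
      fun a b => hsym a b
    rw [← hsym' (hM.eigenvectorBasis i) x, clm_eigBasis, real_inner_smul_left]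
  rw [h1, real_inner_comm x]
  ring

lemma parseval (b : OrthonormalBasis (Fin m) ℝ (EuclideanSpace ℝ (Fin m)))
    (x : EuclideanSpace ℝ (Fin m)) :
    ∑ i, ⟪b i, x⟫ ^ 2 = ‖x‖ ^ 2 := by
  have key := b.sum_inner_mul_inner x x
  rw [real_inner_self_eq_norm_sq] at key
  rw [← key]
  apply Finset.sum_congr rfl
  intro i _
  rw [real_inner_comm x (b i)]
  ring

lemma quad_le (M : Matrix (Fin m) (Fin m) ℝ) (hM : M.IsHermitian)
    (x : EuclideanSpace ℝ (Fin m)) (c : ℝ)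
    (h : ∀ i, ⟪hM.eigenvectorBasis i, x⟫ ≠ 0 → hM.eigenvalues i ≤ c) :
    ⟪x, Matrix.toEuclideanCLM (𝕜 := ℝ) M x⟫ ≤ c * ‖x‖ ^ 2 := by
  rw [quad_expand M hM x, ← parseval hM.eigenvectorBasis x, Finset.mul_sum]
  apply Finset.sum_le_sum
  intro i _
  rcases eq_or_ne (⟪hM.eigenvectorBasis i, x⟫) 0 with h0 | h0
  · simp [h0]
  · exact mul_le_mul_of_nonneg_right (h i h0) (sq_nonneg _)

lemma quad_ge (M : Matrix (Fin m) (Fin m) ℝ) (hM : M.IsHermitian)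
    (x : EuclideanSpace ℝ (Fin m)) (c : ℝ)
    (h : ∀ i, ⟪hM.eigenvectorBasis i, x⟫ ≠ 0 → c ≤ hM.eigenvalues i) :
    c * ‖x‖ ^ 2 ≤ ⟪x, Matrix.toEuclideanCLM (𝕜 := ℝ) M x⟫ := by
  rw [quad_expand M hM x, ← parseval hM.eigenvectorBasis x, Finset.mul_sum]
  apply Finset.sum_le_sum
  intro i _
  rcases eq_or_ne (⟪hM.eigenvectorBasis i, x⟫) 0 with h0 | h0
  · simp [h0]
  · exact mul_le_mul_of_nonneg_right (h i h0) (sq_nonneg _)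

lemma quad_abs_le (M : Matrix (Fin m) (Fin m) ℝ) (x : EuclideanSpace ℝ (Fin m)) :
    |⟪x, Matrix.toEuclideanCLM (𝕜 := ℝ) M x⟫| ≤ ‖Matrix.toEuclideanCLM (𝕜 := ℝ) M‖ * ‖x‖ ^ 2 := by
  calc |⟪x, Matrix.toEuclideanCLM (𝕜 := ℝ) M x⟫|
      ≤ ‖x‖ * ‖Matrix.toEuclideanCLM (𝕜 := ℝ) M x‖ := abs_real_inner_le_norm _ _
    _ ≤ ‖x‖ * (‖Matrix.toEuclideanCLM (𝕜 := ℝ) M‖ * ‖x‖) := by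
        exact mul_le_mul_of_nonneg_left ((Matrix.toEuclideanCLM (𝕜 := ℝ) M).le_opNorm x)
          (norm_nonneg x)
    _ = ‖Matrix.toEuclideanCLM (𝕜 := ℝ) M‖ * ‖x‖ ^ 2 := by ring


set_option maxHeartbeats 2000000 in
/-- If `Σ̄²` is PSD with sorted eigenvalues `σ̄₁² ≥ … ≥ σ̄_d²` summing to `1`, positive
eigengap `κ̄ = (σ̄₁² − σ̄₂²)/σ̄₁²`, and `‖AᵀA − n Σ̄²‖₂ ≤ K₃ max{√n σ̄₁, 1}`, then for
`n ≥ max{d, (2K₃)² d, (4K₃)² d/κ̄²}` the eigengap `κ` and top eigenvalue `σ₁²` of `AᵀA`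
satisfy `κ ≥ κ̄/3` and `σ₁² ≥ n σ̄₁²/2`.  (The ambient dimension is `d + 2 ≥ 2`.) -/
theorem stmt9 {n d : ℕ}
    (S2 : Matrix (Fin (d + 2)) (Fin (d + 2)) ℝ) (hS : S2.PosSemidef)
    (σsq : Fin (d + 2) → ℝ) (e : Equiv.Perm (Fin (d + 2))) (hmono : Antitone σsq)
    (heig : ∀ i, hS.1.eigenvalues i = σsq (e i))
    (hsum : ∑ i, σsq i = 1)
    (hgap : 0 < (σsq 0 - σsq 1) / σsq 0)
    (A : Matrix (Fin n) (Fin (d + 2)) ℝ) (K₃ : ℝ) (hK : 0 < K₃)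
    (hA : matrixSpectralNorm (Aᵀ * A - (n : ℝ) • S2) ≤
      K₃ * max (Real.sqrt n * Real.sqrt (σsq 0)) 1)
    (hAh : (Aᵀ * A).IsHermitian)
    (τsq : Fin (d + 2) → ℝ) (e' : Equiv.Perm (Fin (d + 2))) (hmono' : Antitone τsq)
    (heig' : ∀ i, hAh.eigenvalues i = τsq (e' i))
    (hn : max ((d + 2 : ℕ) : ℝ)
        (max ((2 * K₃) ^ 2 * ((d + 2 : ℕ) : ℝ))
          ((4 * K₃) ^ 2 * ((d + 2 : ℕ) : ℝ) / ((σsq 0 - σsq 1) / σsq 0) ^ 2)) ≤ (n : ℝ)) :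
    (σsq 0 - σsq 1) / σsq 0 / 3 ≤ (τsq 0 - τsq 1) / τsq 0 ∧
      1 / 2 * (n : ℝ) * σsq 0 ≤ τsq 0 := by
  -- Abbreviations
  set s := σsq 0 with hs_def
  set t := σsq 1 with ht_def
  set κ := (s - t) / s with hκ_def
  -- basic nonnegativity of σsq
  have hσnonneg : ∀ i, 0 ≤ σsq i := by
    intro i
    have := hS.eigenvalues_nonneg (e.symm i)
    rwa [heig, e.apply_symm_apply] at this
  have hσle : ∀ i, σsq i ≤ s := fun i => hmono (Fin.zero_le i)
  -- s ≥ 1/(d+2)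
  have hds : 1 ≤ ((d + 2 : ℕ) : ℝ) * s := by
    have : ∑ i, σsq i ≤ ∑ _i : Fin (d + 2), s :=
      Finset.sum_le_sum (fun i _ => hσle i)
    simp only [Finset.sum_const, Finset.card_univ, Fintype.card_fin, nsmul_eq_mul] at this
    rw [hsum] at this
    exact_mod_cast this
  have hd2pos : (0 : ℝ) < ((d + 2 : ℕ) : ℝ) := by positivity
  have hspos : 0 < s := by nlinarith
  have htnonneg : 0 ≤ t := hσnonneg 1
  have hκpos : 0 < κ := hgap
  have hκ1 : κ ≤ 1 := by
    rw [hκ_def, div_le_one hspos]; linarith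
  have hst : t < s := by
    have := (div_pos_iff.mp hκpos)
    rcases this with ⟨h1, _⟩ | ⟨_, h2⟩ <;> linarith
  -- bounds from hn
  have hn1 : ((d + 2 : ℕ) : ℝ) ≤ (n : ℝ) := le_trans (le_max_left _ _) hn
  have hn2 : (2 * K₃) ^ 2 * ((d + 2 : ℕ) : ℝ) ≤ (n : ℝ) :=
    le_trans (le_trans (le_max_left _ _) (le_max_right _ _)) hn
  have hn3 : (4 * K₃) ^ 2 * ((d + 2 : ℕ) : ℝ) / κ ^ 2 ≤ (n : ℝ) :=
    le_trans (le_trans (le_max_right _ _) (le_max_right _ _)) hn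
  have hnpos : (0 : ℝ) < (n : ℝ) := lt_of_lt_of_le hd2pos hn1
  have hnspos : (0 : ℝ) < (n : ℝ) * s := mul_pos hnpos hspos
  have hns1 : 1 ≤ (n : ℝ) * s := by nlinarith
  -- the sqrt quantity
  set r := Real.sqrt ((n : ℝ) * s) with hr_def
  have hr_sq : r ^ 2 = (n : ℝ) * s := Real.sq_sqrt hnspos.le
  have hr_nonneg : 0 ≤ r := Real.sqrt_nonneg _
  have hr1 : 1 ≤ r := by nlinarith
  have hmaxr : max (Real.sqrt n * Real.sqrt s) 1 = r := by
    rw [← Real.sqrt_mul (Nat.cast_nonneg n) s, ← hr_def]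
    exact max_eq_left hr1
  set δ := K₃ * r with hδ_def
  have hδpos : 0 < δ := mul_pos hK (lt_of_lt_of_le one_pos hr1)
  -- δ bounds
  have hδ1 : 2 * δ ≤ (n : ℝ) * s := by
    have h2K : (2 * K₃) ^ 2 ≤ r ^ 2 := by rw [hr_sq]; nlinarith
    have : 2 * K₃ ≤ r := by nlinarith
    nlinarith
  have hδ2 : 4 * δ ≤ κ * ((n : ℝ) * s) := by
    have h4K : (4 * K₃) ^ 2 ≤ κ ^ 2 * r ^ 2 := by
      rw [hr_sq]
      have := (div_le_iff₀ (by positivity : (0:ℝ) < κ ^ 2)).mp hn3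
      nlinarith
    have hx0 : 0 ≤ κ * r := mul_nonneg hκpos.le hr_nonneg
    have : 4 * K₃ ≤ κ * r := by nlinarith [h4K, hx0, hK, mul_self_nonneg (κ * r - 4 * K₃)]
    nlinarith
  -- quadratic form machinery
  set E := Aᵀ * A - (n : ℝ) • S2 with hE_def
  have hnormE : ‖Matrix.toEuclideanCLM (𝕜 := ℝ) E‖ ≤ δ := by
    rw [hδ_def, ← hmaxr]; exact hA
  have hsplit : ∀ x : EuclideanSpace ℝ (Fin (d + 2)),
      ⟪x, Matrix.toEuclideanCLM (𝕜 := ℝ) (Aᵀ * A) x⟫ =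
        (n : ℝ) * ⟪x, Matrix.toEuclideanCLM (𝕜 := ℝ) S2 x⟫ +
          ⟪x, Matrix.toEuclideanCLM (𝕜 := ℝ) E x⟫ := by
    intro x
    have hmap : Matrix.toEuclideanCLM (𝕜 := ℝ) E =
        Matrix.toEuclideanCLM (𝕜 := ℝ) (Aᵀ * A)
          - (n : ℝ) • Matrix.toEuclideanCLM (𝕜 := ℝ) S2 := by
      rw [hE_def, map_sub, _root_.map_smul]
    rw [hmap]
    simp only [ContinuousLinearMap.sub_apply, ContinuousLinearMap.smul_apply,
      inner_sub_right, real_inner_smul_right]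
    ring
  have hqE : ∀ x : EuclideanSpace ℝ (Fin (d + 2)),
      |⟪x, Matrix.toEuclideanCLM (𝕜 := ℝ) E x⟫| ≤ δ * ‖x‖ ^ 2 := by
    intro x
    refine le_trans (quad_abs_le E x) ?_
    exact mul_le_mul_of_nonneg_right hnormE (sq_nonneg _)
  -- eigenbases and distinguished indices
  set u := hS.1.eigenvectorBasis with hu_def
  set w := hAh.eigenvectorBasis with hw_def
  set j₀ := e.symm 0 with hj₀_def
  set i₀ := e'.symm 0 with hi₀_def
  set i₁ := e'.symm 1 with hi₁_def
  have hone : ∀ x : Fin (d + 2), x ≠ 0 → (1 : Fin (d + 2)) ≤ x := by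
    intro x hx
    rw [Fin.le_def, Fin.val_one]
    have : x.val ≠ 0 := fun h => hx (Fin.ext (by simpa using h))
    omega
  have hμle : ∀ i, hAh.eigenvalues i ≤ τsq 0 := by
    intro i; rw [heig']; exact hmono' (Fin.zero_le _)
  have hμ1 : ∀ i, i ≠ i₀ → hAh.eigenvalues i ≤ τsq 1 := by
    intro i hi; rw [heig']
    exact hmono' (hone _ (fun h => hi (by rw [hi₀_def, ← h, Equiv.symm_apply_apply])))
  have hμi₀ : hAh.eigenvalues i₀ = τsq 0 := by rw [heig', hi₀_def, e'.apply_symm_apply]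
  have hμi₁ : hAh.eigenvalues i₁ = τsq 1 := by rw [heig', hi₁_def, e'.apply_symm_apply]
  have hνle : ∀ i, hS.1.eigenvalues i ≤ s := by intro i; rw [heig]; exact hσle _
  have hνt : ∀ i, i ≠ j₀ → hS.1.eigenvalues i ≤ t := by
    intro i hi; rw [heig]
    exact hmono (hone _ (fun h => hi (by rw [hj₀_def, ← h, Equiv.symm_apply_apply])))
  have hνj₀ : hS.1.eigenvalues j₀ = s := by rw [heig, hj₀_def, e.apply_symm_apply]
  have hτ10 : τsq 1 ≤ τsq 0 := hmono' (Fin.zero_le 1)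
  -- Claim 1 : n s - δ ≤ τsq 0
  have h1 : (n : ℝ) * s - δ ≤ τsq 0 := by
    set x : EuclideanSpace ℝ (Fin (d + 2)) := u j₀ with hx_def
    have hx1 : ‖x‖ = 1 := u.orthonormal.1 j₀
    have hqS : s * ‖x‖ ^ 2 ≤ ⟪x, Matrix.toEuclideanCLM (𝕜 := ℝ) S2 x⟫ := by
      apply quad_ge S2 hS.1 x s
      intro i hi
      rcases eq_or_ne i j₀ with h | h
      · rw [h, hνj₀]
      · exact absurd (u.orthonormal.2 h) hi
    have hqM : ⟪x, Matrix.toEuclideanCLM (𝕜 := ℝ) (Aᵀ * A) x⟫ ≤ τsq 0 * ‖x‖ ^ 2 :=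
      quad_le _ hAh x _ (fun i _ => hμle i)
    have hE1 := hqE x
    have hs1 := hsplit x
    rw [hx1] at hqS hqM hE1
    have key : ∀ QM QS QE : ℝ, QM = (n : ℝ) * QS + QE →
        QM ≤ τsq 0 * 1 ^ 2 → s * 1 ^ 2 ≤ QS → |QE| ≤ δ * 1 ^ 2 →
        (n : ℝ) * s - δ ≤ τsq 0 := by
      intro QM QS QE hsp hM hs' hE
      have hE' := abs_le.mp hE
      have hn' : (n : ℝ) * s ≤ (n : ℝ) * QS :=
        mul_le_mul_of_nonneg_left (by linarith) hnpos.le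
      linarith [hE'.1, hE'.2]
    exact key _ _ _ hs1 hqM hqS hE1
  -- Claim 2 : τsq 0 ≤ n s + δ
  have h2 : τsq 0 ≤ (n : ℝ) * s + δ := by
    set x : EuclideanSpace ℝ (Fin (d + 2)) := w i₀ with hx_def
    have hx1 : ‖x‖ = 1 := w.orthonormal.1 i₀
    have hqM : τsq 0 * ‖x‖ ^ 2 ≤ ⟪x, Matrix.toEuclideanCLM (𝕜 := ℝ) (Aᵀ * A) x⟫ := by
      apply quad_ge _ hAh x _
      intro i hi
      rcases eq_or_ne i i₀ with h | h
      · rw [h, hμi₀]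
      · exact absurd (w.orthonormal.2 h) hi
    have hqS : ⟪x, Matrix.toEuclideanCLM (𝕜 := ℝ) S2 x⟫ ≤ s * ‖x‖ ^ 2 :=
      quad_le _ hS.1 x _ (fun i _ => hνle i)
    have hE1 := hqE x
    have hs1 := hsplit x
    rw [hx1] at hqS hqM hE1
    have key : ∀ QM QS QE : ℝ, QM = (n : ℝ) * QS + QE →
        τsq 0 * 1 ^ 2 ≤ QM → QS ≤ s * 1 ^ 2 → |QE| ≤ δ * 1 ^ 2 →
        τsq 0 ≤ (n : ℝ) * s + δ := by
      intro QM QS QE hsp hM hs' hE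
      have hE' := abs_le.mp hE
      have hn' : (n : ℝ) * QS ≤ (n : ℝ) * s :=
        mul_le_mul_of_nonneg_left (by linarith) hnpos.le
      linarith [hE'.1, hE'.2]
    exact key _ _ _ hs1 hqM hqS hE1
  -- Claim 3 : τsq 1 ≤ n t + δ
  have hi01 : i₀ ≠ i₁ := by
    intro h
    have h2 : (0 : Fin (d + 2)) = 1 := e'.symm.injective h
    have h3 := congrArg Fin.val h2
    rw [Fin.val_zero, Fin.val_one] at h3
    exact absurd h3 (by omega)
  have h3 : τsq 1 ≤ (n : ℝ) * t + δ := by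
    obtain ⟨p, q, hpq0, hpqpos⟩ :
        ∃ p q : ℝ, p * ⟪u j₀, w i₀⟫ + q * ⟪u j₀, w i₁⟫ = 0 ∧ 0 < p ^ 2 + q ^ 2 := by
      by_cases ha : ⟪u j₀, w i₀⟫ = 0
      · exact ⟨1, 0, by rw [ha]; ring, by norm_num⟩
      · refine ⟨⟪u j₀, w i₁⟫, -⟪u j₀, w i₀⟫, by ring, ?_⟩
        have hpos : 0 < ⟪u j₀, w i₀⟫ ^ 2 :=
          lt_of_le_of_ne (sq_nonneg _) (Ne.symm (pow_ne_zero 2 ha))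
        nlinarith [sq_nonneg ⟪u j₀, w i₁⟫]
    set x : EuclideanSpace ℝ (Fin (d + 2)) := p • w i₀ + q • w i₁ with hx_def
    have hww0 : ⟪w i₀, w i₀⟫ = (1 : ℝ) := by
      rw [real_inner_self_eq_norm_sq, w.orthonormal.1 i₀]; norm_num
    have hww1 : ⟪w i₁, w i₁⟫ = (1 : ℝ) := by
      rw [real_inner_self_eq_norm_sq, w.orthonormal.1 i₁]; norm_num
    have hc01 : ⟪w i₀, w i₁⟫ = (0 : ℝ) := w.orthonormal.2 hi01
    have hc10 : ⟪w i₁, w i₀⟫ = (0 : ℝ) := w.orthonormal.2 hi01.symm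
    have hnormx : ‖x‖ ^ 2 = p ^ 2 + q ^ 2 := by
      rw [← real_inner_self_eq_norm_sq, hx_def]
      simp only [inner_add_left, inner_add_right, real_inner_smul_left,
        real_inner_smul_right, hww0, hww1, hc01, hc10]
      ring
    have hux : ⟪u j₀, x⟫ = 0 := by
      rw [hx_def]
      simp only [inner_add_right, real_inner_smul_right]
      linarith [hpq0]
    have hqM : τsq 1 * ‖x‖ ^ 2 ≤ ⟪x, Matrix.toEuclideanCLM (𝕜 := ℝ) (Aᵀ * A) x⟫ := by
      apply quad_ge _ hAh x _
      intro i hi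
      rcases eq_or_ne i i₀ with h | h
      · rw [h, hμi₀]; exact hτ10
      rcases eq_or_ne i i₁ with h' | h'
      · rw [h', hμi₁]
      exfalso
      apply hi
      rw [hx_def, ← hw_def]
      simp only [inner_add_right, real_inner_smul_right,
        w.orthonormal.2 h, w.orthonormal.2 h']
      ring
    have hqS : ⟪x, Matrix.toEuclideanCLM (𝕜 := ℝ) S2 x⟫ ≤ t * ‖x‖ ^ 2 := by
      apply quad_le _ hS.1 x _
      intro i hi
      apply hνt
      intro h
      rw [h] at hi
      exact hi hux
    have hE1 := hqE x
    have hs1 := hsplit x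
    rw [hnormx] at hqM hqS
    rw [hnormx] at hE1
    have key : ∀ QM QS QE : ℝ, QM = (n : ℝ) * QS + QE →
        τsq 1 * (p ^ 2 + q ^ 2) ≤ QM → QS ≤ t * (p ^ 2 + q ^ 2) →
        |QE| ≤ δ * (p ^ 2 + q ^ 2) →
        τsq 1 * (p ^ 2 + q ^ 2) ≤ ((n : ℝ) * t + δ) * (p ^ 2 + q ^ 2) := by
      intro QM QS QE hsp hM hs hE
      have hE' := abs_le.mp hE
      have hn' := mul_le_mul_of_nonneg_left hs hnpos.le
      linarith [hE'.1, hE'.2]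
    exact le_of_mul_le_mul_right (key _ _ _ hs1 hqM hqS hE1) hpqpos
  -- final arithmetic
  have hτ0pos : 0 < τsq 0 := by linarith
  have hκs : κ * s = s - t := by
    rw [hκ_def]; field_simp
  constructor
  · rw [div_le_div_iff₀ (by norm_num) hτ0pos]
    have hnt : (n : ℝ) * t = (n : ℝ) * s - κ * ((n : ℝ) * s) := by
      linear_combination (n : ℝ) * hκs
    nlinarith [mul_le_mul_of_nonneg_left h2 hκpos.le,
      mul_le_of_le_one_left hδpos.le hκ1, hδ2, h1, h3]
  · linarith
end

section
/- Let σ₁, σ₂, Υ, K, ε > 0, n ≥ 1, T ≥ 1, and let s ≥ 0 be a real number satisfying (σ₂² + K/ε + (K/ε)s)·s = s·(σ₁² − (K/ε)·σ₁Υ) − (K/ε)·σ₁Υ; set α = σ₂² + K/ε + (K/ε)s. Suppose nonnegative real numbers M^{(t,k)} (for t, k ≥ 0 with t + k ≤ T) and m^{(t)} (for 0 ≤ t ≤ T) satisfy: M^{(t+1,k)} ≤ M^{(t,k+1)} + (σ₂^{2k}·K/ε)·(M^{(t,0)} + σ₁Υ·m^{(t)}) + σ₂^{2k}·K/(ε·n^{4T})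 whenever t + k + 1 ≤ T, and m^{(t+1)} ≥ σ₁²·m^{(t)} − (K/ε)·(M^{(t,0)} + σ₁Υ·m^{(t)}) − K/(ε·n^{4T}) whenever t + 1 ≤ T. Let M^{(0)} := max_{0 ≤ k ≤ T} M^{(0,k)}/σ₂^{2k}. Then for all t, k ≥ 0 with t + k ≤ T: M^{(t,k)} − σ₂^{2k}·s·m^{(t)} ≤ α^t · σ₂^{2k} · (M^{(0)} − s·m^{(0)}) + (∑_{i=0}^{t−1} α^i) · σ₂^{2k}·K·(1+s)/(ε·n^{4T}). -/
/-- Recurrence lemma for the private power method: if `s ≥ 0` solves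
`(σ₂² + K/ε + (K/ε)s)s = s(σ₁² − (K/ε)σ₁Υ) − (K/ε)σ₁Υ`, `α = σ₂² + K/ε + (K/ε)s`, and the
nonnegative sequences `M⁽ᵗ'ᵏ⁾`, `m⁽ᵗ⁾` satisfy the stated recurrences, then for all
`t + k ≤ T`,
`M⁽ᵗ'ᵏ⁾ − σ₂^{2k} s m⁽ᵗ⁾ ≤ αᵗ σ₂^{2k} (M⁽⁰⁾ − s m⁽⁰⁾) + (∑_{i<t} αⁱ) σ₂^{2k} K(1+s)/(ε n^{4T})`
where `M⁽⁰⁾ = max_{k ≤ T} M⁽⁰'ᵏ⁾/σ₂^{2k}`. -/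
theorem stmt13 (σ₁ σ₂ Υ K ε : ℝ) (hσ₁ : 0 < σ₁) (hσ₂ : 0 < σ₂) (hΥ : 0 < Υ)
    (hK : 0 < K) (hε : 0 < ε) (n T : ℕ) (hn : 1 ≤ n) (hT : 1 ≤ T)
    (s : ℝ) (hs : 0 ≤ s)
    (hseq : (σ₂ ^ 2 + K / ε + K / ε * s) * s =
      s * (σ₁ ^ 2 - K / ε * (σ₁ * Υ)) - K / ε * (σ₁ * Υ))
    (M : ℕ → ℕ → ℝ) (m : ℕ → ℝ)
    (hMnn : ∀ t k, t + k ≤ T → 0 ≤ M t k) (hmnn : ∀ t ≤ T, 0 ≤ m t)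
    (hMrec : ∀ t k, t + k + 1 ≤ T →
      M (t + 1) k ≤ M t (k + 1) + σ₂ ^ (2 * k) * K / ε * (M t 0 + σ₁ * Υ * m t) +
        σ₂ ^ (2 * k) * K / (ε * (n : ℝ) ^ (4 * T)))
    (hmrec : ∀ t, t + 1 ≤ T →
      σ₁ ^ 2 * m t - K / ε * (M t 0 + σ₁ * Υ * m t) - K / (ε * (n : ℝ) ^ (4 * T)) ≤
        m (t + 1)) :
    ∀ t k, t + k ≤ T →
      M t k - σ₂ ^ (2 * k) * s * m t ≤
        (σ₂ ^ 2 + K / ε + K / ε * s) ^ t * σ₂ ^ (2 * k) *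
            ((Finset.range (T + 1)).sup' ⟨0, Finset.mem_range.mpr (Nat.succ_pos T)⟩
              (fun j => M 0 j / σ₂ ^ (2 * j)) - s * m 0) +
          (∑ i ∈ Finset.range t, (σ₂ ^ 2 + K / ε + K / ε * s) ^ i) *
            σ₂ ^ (2 * k) * K * (1 + s) / (ε * (n : ℝ) ^ (4 * T)) := by
  intro t
  induction t with
  | zero =>
    intro k hk
    have hQ : (0:ℝ) < σ₂ ^ (2 * k) := by positivity
    have hk' : k ∈ Finset.range (T + 1) := Finset.mem_range.mpr (by omega)
    have hsup := Finset.le_sup' (fun j => M 0 j / σ₂ ^ (2 * j)) hk'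
    have hM0 : M 0 k ≤ ((Finset.range (T + 1)).sup' Finset.nonempty_range_add_one
        (fun j => M 0 j / σ₂ ^ (2 * j))) * σ₂ ^ (2 * k) := by
      rw [← div_le_iff₀ hQ]; exact hsup
    simp only [pow_zero, Finset.range_zero, Finset.sum_empty, one_mul, zero_mul, zero_div,
      add_zero]
    nlinarith [hM0]
  | succ t ih =>
    intro k hk
    have h1 := hMrec t k (by omega)
    have h2 := hmrec t (by omega)
    have h3 := ih (k + 1) (by omega)
    have h4 := ih 0 (by omega)
    have hQ : (0:ℝ) < σ₂ ^ (2 * k) := by positivity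
    have hpow : σ₂ ^ (2 * (k + 1)) = σ₂ ^ (2 * k) * σ₂ ^ 2 := by
      rw [show 2 * (k + 1) = 2 * k + 2 by ring, pow_add]
    rw [hpow] at h3
    simp only [Nat.mul_zero, pow_zero, one_mul, mul_one] at h4
    have hmt := hmnn t (by omega)
    have h2' : σ₂ ^ (2 * k) * s *
        (σ₁ ^ 2 * m t - K / ε * (M t 0 + σ₁ * Υ * m t) - K / (ε * (n : ℝ) ^ (4 * T))) ≤
        σ₂ ^ (2 * k) * s * m (t + 1) :=
      mul_le_mul_of_nonneg_left h2 (by positivity)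
    have h4' : σ₂ ^ (2 * k) * (K / ε * (1 + s)) *
        (M t 0 - s * m t) ≤ σ₂ ^ (2 * k) * (K / ε * (1 + s)) *
        ((σ₂ ^ 2 + K / ε + K / ε * s) ^ t *
            ((Finset.range (T + 1)).sup' Finset.nonempty_range_add_one
              (fun j => M 0 j / σ₂ ^ (2 * j)) - s * m 0) +
          (∑ i ∈ Finset.range t, (σ₂ ^ 2 + K / ε + K / ε * s) ^ i) *
            K * (1 + s) / (ε * (n : ℝ) ^ (4 * T))) := by
      apply mul_le_mul_of_nonneg_left _ (by positivity)
      linarith [h4]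
    have hseq' : σ₂ ^ (2 * k) * m t * ((σ₂ ^ 2 + K / ε + K / ε * s) * s) =
        σ₂ ^ (2 * k) * m t * (s * (σ₁ ^ 2 - K / ε * (σ₁ * Υ)) - K / ε * (σ₁ * Υ)) := by
      rw [hseq]
    rw [geom_sum_succ, pow_succ]
    set A := (Finset.range (T + 1)).sup' Finset.nonempty_range_add_one
        (fun j => M 0 j / σ₂ ^ (2 * j)) - s * m 0 with hA
    set S := ∑ i ∈ Finset.range t, (σ₂ ^ 2 + K / ε + K / ε * s) ^ i with hS
    set at_ := (σ₂ ^ 2 + K / ε + K / ε * s) ^ t with hat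
    set Q := σ₂ ^ (2 * k) with hQdef
    set N := (n : ℝ) ^ (4 * T) with hN
    have key : at_ * (σ₂ ^ 2 + K / ε + K / ε * s) * Q * A +
        ((σ₂ ^ 2 + K / ε + K / ε * s) * S + 1) * Q * K * (1 + s) / (ε * N) -
        (M (t + 1) k - Q * s * m (t + 1))
      = ((M t (k + 1) + Q * K / ε * (M t 0 + σ₁ * Υ * m t) + Q * K / (ε * N)) - M (t + 1) k)
      + (Q * s * m (t + 1) -
          Q * s * (σ₁ ^ 2 * m t - K / ε * (M t 0 + σ₁ * Υ * m t) - K / (ε * N)))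
      + ((at_ * (Q * σ₂ ^ 2) * A + S * (Q * σ₂ ^ 2) * K * (1 + s) / (ε * N)) -
          (M t (k + 1) - Q * σ₂ ^ 2 * s * m t))
      + ((Q * (K / ε * (1 + s)) * (at_ * A + S * K * (1 + s) / (ε * N))) -
          (Q * (K / ε * (1 + s)) * (M t 0 - s * m t)))
      - (Q * m t * ((σ₂ ^ 2 + K / ε + K / ε * s) * s) -
          Q * m t * (s * (σ₁ ^ 2 - K / ε * (σ₁ * Υ)) - K / ε * (σ₁ * Υ))) := by
      ring
    linarith [key, h1, h2', h3, h4', hseq']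
end

section
/- Let σ₁, σ₂, Υ, K, ε > 0, n ≥ 1, T ≥ 1. Suppose σ₁² − (K/ε)·σ₁Υ − σ₂² − K/ε > 0 and the quadratic equation (K/ε)s² − (σ₁² − (K/ε)·σ₁Υ − σ₂² − K/ε)s + (K/ε)·σ₁Υ = 0 has two real roots s₁ ≥ s₂ > 0; set α_i = σ₂² + K/ε + (K/ε)s_i for i = 1, 2, and assume α₁ ≥ α₂ ≥ 1. Suppose nonnegative real numbers M^{(t,k)} (for t + k ≤ T) and m^{(t)} (for 0 ≤ t ≤ T) satisfy: M^{(t+1,k)} ≤ M^{(t,k+1)} + (σ₂^{2k}·K/ε)·(M^{(t,0)} + σ₁Υ·m^{(t)}) + σ₂^{2k}·K/(ε·n^{4T}) whenever t + k + 1 ≤ T, and m^{(t+1)} ≥ σ₁²·m^{(t)} − (K/ε)·(M^{(t,0)} + σ₁Υ·m^{(t)}) − K/(ε·n^{4T}) whenever t + 1 ≤ T. Let M^{(0)} := max_{0 ≤ k ≤ T} M^{(0,k)}/σ₂^{2k}. Then for all 0 ≤ t ≤ T: s₁·m^{(t)} − M^{(t,0)} ≥ α₁^t · ( s₁·m^{(0)}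 − M^{(0)} − (T/α₁)·K·(1+s₁)/(ε·n^{4T}) ), and M^{(t,0)} − s₂·m^{(t)} ≤ α₂^t · ( M^{(0)} − s₂·m^{(0)} + (T/α₂)·K·(1+s₂)/(ε·n^{4T}) ). -/
lemma stmt14_aux (α D : ℝ) (hα : 1 ≤ α) (hD : 0 ≤ D) (T : ℕ) (x : ℕ → ℝ)
    (hrec : ∀ t, t + 1 ≤ T → x (t + 1) ≤ α * x t + D) :
    ∀ t ≤ T, x t ≤ α ^ t * (x 0 + (T : ℝ) / α * D) := by
  have hα0 : (0:ℝ) < α := lt_of_lt_of_le one_pos hα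
  have key : ∀ t ≤ T, x t ≤ α ^ t * x 0 + (∑ i ∈ Finset.range t, α ^ i) * D := by
    intro t
    induction t with
    | zero => intro _; simp
    | succ t ih =>
      intro ht
      have h1 := ih (by omega)
      have h2 := hrec t ht
      have h3 : α * x t ≤ α * (α ^ t * x 0 + (∑ i ∈ Finset.range t, α ^ i) * D) :=
        mul_le_mul_of_nonneg_left h1 hα0.le
      rw [geom_sum_succ, pow_succ]
      nlinarith [h2, h3]
  intro t ht
  have h1 := key t ht
  have hS : (∑ i ∈ Finset.range t, α ^ i) * α ≤ (T : ℝ) * α ^ t := by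
    calc (∑ i ∈ Finset.range t, α ^ i) * α = ∑ i ∈ Finset.range t, α ^ (i + 1) := by
          rw [Finset.sum_mul]; exact Finset.sum_congr rfl fun i _ => (pow_succ α i).symm
      _ ≤ ∑ i ∈ Finset.range t, α ^ t :=
          Finset.sum_le_sum fun i hi =>
            pow_le_pow_right₀ hα (by have := Finset.mem_range.mp hi; omega)
      _ = (t : ℝ) * α ^ t := by rw [Finset.sum_const, nsmul_eq_mul, Finset.card_range]
      _ ≤ (T : ℝ) * α ^ t :=
          mul_le_mul_of_nonneg_right (by exact_mod_cast ht) (pow_nonneg hα0.le t)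
  have hS' : (∑ i ∈ Finset.range t, α ^ i) * D ≤ ((T : ℝ) * α ^ t / α) * D :=
    mul_le_mul_of_nonneg_right ((le_div_iff₀ hα0).mpr hS) hD
  have heq : (T : ℝ) * α ^ t / α * D = α ^ t * ((T : ℝ) / α * D) := by ring
  nlinarith [h1, hS']

/-- Exponential growth bounds: with `s₁ ≥ s₂ > 0` the two roots of the quadratic
`(K/ε)s² − (σ₁² − (K/ε)σ₁Υ − σ₂² − K/ε)s + (K/ε)σ₁Υ = 0`, `αᵢ = σ₂² + K/ε + (K/ε)sᵢ`
with `α₁ ≥ α₂ ≥ 1`, and sequences satisfying the power-method recurrences, for all `t ≤ T`: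
`s₁ m⁽ᵗ⁾ − M⁽ᵗ'⁰⁾ ≥ α₁ᵗ (s₁ m⁽⁰⁾ − M⁽⁰⁾ − (T/α₁) K(1+s₁)/(ε n^{4T}))` and
`M⁽ᵗ'⁰⁾ − s₂ m⁽ᵗ⁾ ≤ α₂ᵗ (M⁽⁰⁾ − s₂ m⁽⁰⁾ + (T/α₂) K(1+s₂)/(ε n^{4T}))`. -/
theorem stmt14 (σ₁ σ₂ Υ K ε : ℝ) (hσ₁ : 0 < σ₁) (hσ₂ : 0 < σ₂) (hΥ : 0 < Υ)
    (hK : 0 < K) (hε : 0 < ε) (n T : ℕ) (hn : 1 ≤ n) (hT : 1 ≤ T)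
    (hpos : 0 < σ₁ ^ 2 - K / ε * (σ₁ * Υ) - σ₂ ^ 2 - K / ε)
    (s₁ s₂ : ℝ) (hs₂pos : 0 < s₂) (hs₁₂ : s₂ ≤ s₁)
    (hq₁ : K / ε * s₁ ^ 2 - (σ₁ ^ 2 - K / ε * (σ₁ * Υ) - σ₂ ^ 2 - K / ε) * s₁ +
      K / ε * (σ₁ * Υ) = 0)
    (hq₂ : K / ε * s₂ ^ 2 - (σ₁ ^ 2 - K / ε * (σ₁ * Υ) - σ₂ ^ 2 - K / ε) * s₂ +
      K / ε * (σ₁ * Υ) = 0)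
    (hα₂ : 1 ≤ σ₂ ^ 2 + K / ε + K / ε * s₂)
    (hα₁₂ : σ₂ ^ 2 + K / ε + K / ε * s₂ ≤ σ₂ ^ 2 + K / ε + K / ε * s₁)
    (M : ℕ → ℕ → ℝ) (m : ℕ → ℝ)
    (hMnn : ∀ t k, t + k ≤ T → 0 ≤ M t k) (hmnn : ∀ t ≤ T, 0 ≤ m t)
    (hMrec : ∀ t k, t + k + 1 ≤ T →
      M (t + 1) k ≤ M t (k + 1) + σ₂ ^ (2 * k) * K / ε * (M t 0 + σ₁ * Υ * m t) +
        σ₂ ^ (2 * k) * K / (ε * (n : ℝ) ^ (4 * T)))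
    (hmrec : ∀ t, t + 1 ≤ T →
      σ₁ ^ 2 * m t - K / ε * (M t 0 + σ₁ * Υ * m t) - K / (ε * (n : ℝ) ^ (4 * T)) ≤
        m (t + 1)) :
    ∀ t ≤ T,
      ((σ₂ ^ 2 + K / ε + K / ε * s₁) ^ t *
          (s₁ * m 0 -
            (Finset.range (T + 1)).sup' Finset.nonempty_range_add_one
              (fun j => M 0 j / σ₂ ^ (2 * j)) -
            (T : ℝ) / (σ₂ ^ 2 + K / ε + K / ε * s₁) * K * (1 + s₁) /
              (ε * (n : ℝ) ^ (4 * T))) ≤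
        s₁ * m t - M t 0) ∧
      M t 0 - s₂ * m t ≤
        (σ₂ ^ 2 + K / ε + K / ε * s₂) ^ t *
          ((Finset.range (T + 1)).sup' Finset.nonempty_range_add_one
              (fun j => M 0 j / σ₂ ^ (2 * j)) -
            s₂ * m 0 +
            (T : ℝ) / (σ₂ ^ 2 + K / ε + K / ε * s₂) * K * (1 + s₂) /
              (ε * (n : ℝ) ^ (4 * T))) := by
  have hκ : 0 < K / ε := div_pos hK hε
  have hn' : (0:ℝ) < (n : ℝ) := by exact_mod_cast Nat.lt_of_lt_of_le Nat.zero_lt_one hn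
  have hnp : (0:ℝ) < (n : ℝ) ^ (4 * T) := pow_pos hn' _
  set E : ℝ := K / (ε * (n : ℝ) ^ (4 * T)) with hEdef
  have hEpos : 0 < E := div_pos hK (mul_pos hε hnp)
  set α₁ : ℝ := σ₂ ^ 2 + K / ε + K / ε * s₁ with hα₁def
  set α₂' : ℝ := σ₂ ^ 2 + K / ε + K / ε * s₂ with hα₂def
  have hα₁ : 1 ≤ α₁ := le_trans hα₂ hα₁₂
  have hs₁pos : 0 < s₁ := lt_of_lt_of_le hs₂pos hs₁₂
  set B : ℕ → ℝ := fun t => (Finset.range (T - t + 1)).sup' Finset.nonempty_range_add_one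
    (fun k => M t k / σ₂ ^ (2 * k)) with hBdef
  have hB0 : (Finset.range (T + 1)).sup' Finset.nonempty_range_add_one
      (fun j => M 0 j / σ₂ ^ (2 * j)) = B 0 := rfl
  have hMleB : ∀ t k, t + k ≤ T → M t k / σ₂ ^ (2 * k) ≤ B t := fun t k h =>
    Finset.le_sup' (fun k => M t k / σ₂ ^ (2 * k)) (Finset.mem_range.mpr (by omega))
  have hM0leB : ∀ t ≤ T, M t 0 ≤ B t := by
    intro t ht
    have := hMleB t 0 (by omega)
    simpa using this
  -- recurrences for B and m
  have hBrec : ∀ t, t + 1 ≤ T →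
      B (t + 1) ≤ (σ₂ ^ 2 + K / ε) * B t + K / ε * (σ₁ * Υ) * m t + E := by
    intro t ht
    apply Finset.sup'_le
    intro k hk
    have hk' : k ≤ T - (t + 1) := by have := Finset.mem_range.mp hk; omega
    have hrec := hMrec t k (by omega)
    have hpk : (0:ℝ) < σ₂ ^ (2 * k) := pow_pos hσ₂ _
    have h1 : M t (k + 1) ≤ B t * σ₂ ^ (2 * (k + 1)) :=
      (div_le_iff₀ (pow_pos hσ₂ _)).mp (hMleB t (k + 1) (by omega))
    have h0 : M t 0 ≤ B t := hM0leB t (by omega)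
    have hpow : σ₂ ^ (2 * (k + 1)) = σ₂ ^ (2 * k) * σ₂ ^ 2 := by
      rw [show 2 * (k + 1) = 2 * k + 2 by ring, pow_add]
    rw [div_le_iff₀ hpk, hEdef]
    have h1' : M t (k + 1) ≤ B t * (σ₂ ^ (2 * k) * σ₂ ^ 2) := hpow ▸ h1
    have h2 : σ₂ ^ (2 * k) * K / ε * (M t 0 + σ₁ * Υ * m t) ≤
        σ₂ ^ (2 * k) * (K / ε) * (B t + σ₁ * Υ * m t) := by
      have he : σ₂ ^ (2 * k) * K / ε * (M t 0 + σ₁ * Υ * m t) =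
          σ₂ ^ (2 * k) * (K / ε) * (M t 0 + σ₁ * Υ * m t) := by ring
      rw [he]
      exact mul_le_mul_of_nonneg_left (by linarith) (by positivity)
    have key : B t * (σ₂ ^ (2 * k) * σ₂ ^ 2) +
        σ₂ ^ (2 * k) * (K / ε) * (B t + σ₁ * Υ * m t) +
        σ₂ ^ (2 * k) * K / (ε * (n : ℝ) ^ (4 * T)) =
        ((σ₂ ^ 2 + K / ε) * B t + K / ε * (σ₁ * Υ) * m t +
          K / (ε * (n : ℝ) ^ (4 * T))) * σ₂ ^ (2 * k) := by ring
    calc M (t + 1) k ≤ M t (k + 1) + σ₂ ^ (2 * k) * K / ε * (M t 0 + σ₁ * Υ * m t) +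
          σ₂ ^ (2 * k) * K / (ε * (n : ℝ) ^ (4 * T)) := hrec
      _ ≤ B t * (σ₂ ^ (2 * k) * σ₂ ^ 2) +
          σ₂ ^ (2 * k) * (K / ε) * (B t + σ₁ * Υ * m t) +
          σ₂ ^ (2 * k) * K / (ε * (n : ℝ) ^ (4 * T)) :=
        add_le_add (add_le_add h1' h2) le_rfl
      _ = _ := key
  have hmrec' : ∀ t, t + 1 ≤ T →
      σ₁ ^ 2 * m t - K / ε * (B t + σ₁ * Υ * m t) - E ≤ m (t + 1) := by
    intro t ht
    have h1 := hmrec t ht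
    have h0 := hM0leB t (by omega)
    have h2 : K / ε * (M t 0 + σ₁ * Υ * m t) ≤ K / ε * (B t + σ₁ * Υ * m t) :=
      mul_le_mul_of_nonneg_left (by linarith) hκ.le
    linarith [h1, h2]
  -- eigenvalue identities
  have key₁ : s₁ * σ₁ ^ 2 - K / ε * (σ₁ * Υ) * (1 + s₁) = α₁ * s₁ := by
    rw [hα₁def]; linear_combination -hq₁
  have key₂ : s₂ * σ₁ ^ 2 - K / ε * (σ₁ * Υ) * (1 + s₂) = α₂' * s₂ := by
    rw [hα₂def]; linear_combination -hq₂
  -- one-step inequalities for x_i t = B t - s_i * m t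
  have step : ∀ (s α : ℝ), 0 < s →
      (s * σ₁ ^ 2 - K / ε * (σ₁ * Υ) * (1 + s) = α * s) →
      (α = σ₂ ^ 2 + K / ε + K / ε * s) →
      ∀ t, t + 1 ≤ T →
      B (t + 1) - s * m (t + 1) ≤ α * (B t - s * m t) + (1 + s) * E := by
    intro s α hs hkey hαdef t ht
    have h1 := hBrec t ht
    have h2 := hmrec' t ht
    have h3 : s * (σ₁ ^ 2 * m t - K / ε * (B t + σ₁ * Υ * m t) - E) ≤ s * m (t + 1) :=
      mul_le_mul_of_nonneg_left h2 hs.le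
    have keym : (s * σ₁ ^ 2 - K / ε * (σ₁ * Υ) * (1 + s)) * m t = α * s * m t := by
      rw [hkey]
    rw [hαdef] at keym ⊢
    linarith [h1, h3, keym]
  have bound₁ := stmt14_aux α₁ ((1 + s₁) * E) hα₁
    (by positivity) T (fun t => B t - s₁ * m t)
    (step s₁ α₁ hs₁pos key₁ hα₁def)
  have bound₂ := stmt14_aux α₂' ((1 + s₂) * E) hα₂
    (by positivity) T (fun t => B t - s₂ * m t)
    (step s₂ α₂' hs₂pos key₂ hα₂def)
  intro t ht
  have hb₁ := bound₁ t ht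
  have hb₂ := bound₂ t ht
  have hMB := hM0leB t ht
  rw [hB0]
  have hC₁ : (T : ℝ) / α₁ * K * (1 + s₁) / (ε * (n : ℝ) ^ (4 * T)) =
      (T : ℝ) / α₁ * ((1 + s₁) * E) := by rw [hEdef]; ring
  have hC₂ : (T : ℝ) / α₂' * K * (1 + s₂) / (ε * (n : ℝ) ^ (4 * T)) =
      (T : ℝ) / α₂' * ((1 + s₂) * E) := by rw [hEdef]; ring
  rw [hC₁, hC₂]
  constructor
  · linarith [hb₁, hMB]
  · linarith [hb₂, hMB]
end

section
/- Let σ₁ > 0, σ₂ ≥ 0, Υ ≥ 0 with σ₁·Υ ≤ 1, let ε > 0, K ≥ 5, and set κ := (σ₁² − σ₂²)/σ₁². Assume κ ≥ 4·( (K/(ε·σ₁))·Υ + K²/(ε·σ₁²) ). Then the quadratic equation (K/ε)s² − (σ₁² − (K/ε)·σ₁Υ − σ₂² − K/ε)s + (K/ε)·σ₁Υ = 0 has two real roots s₁ ≥ s₂ ≥ 0, and with α_i := σ₂² + K/ε + (K/ε)s_i for i = 1, 2, one has: s₁ ≥ K − 1, s₂ ≤ σ₁·Υ, and α₁/α₂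 ≥ 1 + κ/2. -/
set_option maxHeartbeats 1000000


/-- Bounds on the roots of the power-method quadratic: if `σ₁Υ ≤ 1`, `K ≥ 5`, and the
eigengap `κ = (σ₁² − σ₂²)/σ₁²` satisfies `κ ≥ 4(KΥ/(εσ₁) + K²/(εσ₁²))`, then the quadratic
`(K/ε)s² − (σ₁² − (K/ε)σ₁Υ − σ₂² − K/ε)s + (K/ε)σ₁Υ = 0` has two real roots `s₁ ≥ s₂ ≥ 0`
with `s₁ ≥ K − 1`, `s₂ ≤ σ₁Υ`, and `α₁/α₂ ≥ 1 + κ/2` where `αᵢ = σ₂² + K/ε + (K/ε)sᵢ`. -/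
theorem stmt15 (σ₁ σ₂ Υ K ε : ℝ) (hσ₁ : 0 < σ₁) (hσ₂ : 0 ≤ σ₂) (hΥ : 0 ≤ Υ)
    (hσΥ : σ₁ * Υ ≤ 1) (hε : 0 < ε) (hK : 5 ≤ K)
    (hκ : 4 * (K / (ε * σ₁) * Υ + K ^ 2 / (ε * σ₁ ^ 2)) ≤ (σ₁ ^ 2 - σ₂ ^ 2) / σ₁ ^ 2) :
    ∃ s₁ s₂ : ℝ, 0 ≤ s₂ ∧ s₂ ≤ s₁ ∧
      K / ε * s₁ ^ 2 - (σ₁ ^ 2 - K / ε * (σ₁ * Υ) - σ₂ ^ 2 - K / ε) * s₁ +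
        K / ε * (σ₁ * Υ) = 0 ∧
      K / ε * s₂ ^ 2 - (σ₁ ^ 2 - K / ε * (σ₁ * Υ) - σ₂ ^ 2 - K / ε) * s₂ +
        K / ε * (σ₁ * Υ) = 0 ∧
      K - 1 ≤ s₁ ∧ s₂ ≤ σ₁ * Υ ∧
      1 + (σ₁ ^ 2 - σ₂ ^ 2) / σ₁ ^ 2 / 2 ≤
        (σ₂ ^ 2 + K / ε + K / ε * s₁) / (σ₂ ^ 2 + K / ε + K / ε * s₂) := by
  have hσ1sq : (0:ℝ) < σ₁ ^ 2 := by positivity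
  -- the gap condition, cleared of denominators
  have gap0 : 4 * (K / ε * (σ₁ * Υ) + K / ε * K) ≤ σ₁ ^ 2 - σ₂ ^ 2 := by
    have h := (le_div_iff₀ hσ1sq).mp hκ
    have heq : 4 * (K / (ε * σ₁) * Υ + K ^ 2 / (ε * σ₁ ^ 2)) * σ₁ ^ 2
        = 4 * (K / ε * (σ₁ * Υ) + K / ε * K) := by
      field_simp
    linarith [heq ▸ h]
  have haK : 5 * (K / ε) ≤ K / ε * K := by
    have : 0 ≤ (K - 5) * (K / ε) :=
      mul_nonneg (by linarith) (le_of_lt (div_pos (by linarith) hε))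
    nlinarith
  set a := K / ε with ha_def
  have ha : 0 < a := div_pos (by linarith) hε
  set T := σ₁ * Υ with hT_def
  have hT0 : 0 ≤ T := mul_nonneg hσ₁.le hΥ
  have hT1 : T ≤ 1 := hσΥ
  have gap : 4 * a * T + 20 * a ≤ σ₁ ^ 2 - σ₂ ^ 2 := by linarith
  have haT : 0 ≤ a * T := mul_nonneg ha.le hT0
  set b := σ₁ ^ 2 - a * T - σ₂ ^ 2 - a with hb_def
  have hb : 3 * a * T + 19 * a ≤ b := by
    simp only [hb_def]; linarith
  have hbK : (K - 1) * (2 * a) ≤ b := by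
    have h1 := (le_div_iff₀ hσ1sq).mp hκ
    have heq : 4 * (K / (ε * σ₁) * Υ + K ^ 2 / (ε * σ₁ ^ 2)) * σ₁ ^ 2
        = 4 * (a * T + a * K) := by
      rw [ha_def, hT_def]; field_simp
    have h2 : 4 * (a * T + a * K) ≤ σ₁ ^ 2 - σ₂ ^ 2 := by linarith [heq ▸ h1]
    have h3 : (K - 1) * (2 * a) ≤ 4 * (a * K) - a := by nlinarith
    simp only [hb_def]; nlinarith
  have hb2a : 2 * a ≤ b := by linarith
  set D := b ^ 2 - 4 * a * (a * T) with hD_def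
  clear_value D
  clear_value b
  clear_value T
  clear_value a
  have hD0 : 0 ≤ D := by
    rw [hD_def]
    nlinarith [mul_nonneg (mul_nonneg ha.le ha.le) (by linarith : (0:ℝ) ≤ 1 - T),
      mul_le_mul hb2a hb2a (by linarith) (by linarith)]
  set r := Real.sqrt D with hr_def
  have hr0 : 0 ≤ r := Real.sqrt_nonneg D
  have hr2 : r ^ 2 = D := Real.sq_sqrt hD0
  clear_value r
  rw [hD_def] at hr2
  have hrb : r ≤ b := by
    nlinarith [mul_nonneg (mul_nonneg ha.le ha.le) hT0]
  have hba1T : 0 ≤ b - a - a * T := by linarith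
  have hrlb : b - 2 * a ≤ r := by
    nlinarith [mul_nonneg ha.le hba1T]
  have hbT : 2 * a * T ≤ b := by linarith
  have hrT : b - 2 * a * T ≤ r := by
    nlinarith [mul_nonneg (mul_nonneg ha.le hT0) hba1T]
  have h2a : (0:ℝ) < 2 * a := by linarith
  have hane : a ≠ 0 := ha.ne'
  refine ⟨(b + r) / (2 * a), (b - r) / (2 * a), ?_, ?_, ?_, ?_, ?_, ?_, ?_⟩
  · exact div_nonneg (by linarith) h2a.le
  · exact div_le_div_of_nonneg_right (by linarith) h2a.le
  · have key : a * ((b + r) / (2 * a)) ^ 2 - b * ((b + r) / (2 * a)) + a * T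
        = (r ^ 2 - (b ^ 2 - 4 * a * (a * T))) / (4 * a) := by
      field_simp
      ring
    rw [key, hr2]
    simp
  · have key : a * ((b - r) / (2 * a)) ^ 2 - b * ((b - r) / (2 * a)) + a * T
        = (r ^ 2 - (b ^ 2 - 4 * a * (a * T))) / (4 * a) := by
      field_simp
      ring
    rw [key, hr2]
    simp
  · rw [le_div_iff₀ h2a]
    linarith
  · rw [div_le_iff₀ h2a]
    linarith
  · have e1 : a * ((b + r) / (2 * a)) = (b + r) / 2 := by
      field_simp
    have e2 : a * ((b - r) / (2 * a)) = (b - r) / 2 := by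
      field_simp
    have hα₂ : 0 < σ₂ ^ 2 + a + a * ((b - r) / (2 * a)) := by
      rw [e2]; nlinarith [sq_nonneg σ₂]
    rw [le_div_iff₀ hα₂, e1, e2]
    set k := (σ₁ ^ 2 - σ₂ ^ 2) / σ₁ ^ 2 with hk_def
    have hkeq : k * σ₁ ^ 2 = σ₁ ^ 2 - σ₂ ^ 2 := by
      rw [hk_def]; field_simp
    have hgap0 : 0 ≤ σ₁ ^ 2 - σ₂ ^ 2 := by linarith
    have hk0 : 0 ≤ k := by rw [hk_def]; exact div_nonneg hgap0 hσ1sq.le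
    have hσle : σ₂ ^ 2 ≤ σ₁ ^ 2 := by linarith
    have hk1 : k ≤ 1 := by rw [hk_def, div_le_one hσ1sq]; linarith [sq_nonneg σ₂]
    clear_value k
    have hkσ : k * σ₂ ^ 2 ≤ σ₁ ^ 2 - σ₂ ^ 2 := by
      nlinarith [mul_nonneg hk0 hgap0]
    nlinarith [mul_nonneg hk0 (by linarith : 0 ≤ 2 * a * T - (b - r)),
      mul_nonneg (by linarith : (0:ℝ) ≤ 1 - k) (by linarith : 0 ≤ a + a * T)]
end

section
/- There is an absolute constant C > 0 with the following property. Let d ≥ 1, and let W be a finite set of vectors in ℝ^d, each of Euclidean norm at most 1, with |W| ≤ N for some N ≥ 40. Let s₁ ≥ C·√(log N) and let c ≥ 0 satisfy c ≤ s₁/1200. Let y ~ N(0, I_d). Then with probability at least 3/4, s₁·|y₁| > max_{w∈W} |⟨y, w⟩| + c + s₁/1000, where y₁ denotes the first coordinate of y. -/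
open MeasureTheory ProbabilityTheory

/-- The standard Gaussian measure on `ℝ^d`. -/
noncomputable def stdGaussian (d : ℕ) : Measure (Fin d → ℝ) :=
  Measure.pi fun _ => gaussianReal 0 1

namespace Stmt16Aux

open Real
open scoped ENNReal NNReal

instance (d : ℕ) : IsProbabilityMeasure (stdGaussian d) := by
  unfold _root_.stdGaussian; infer_instance

lemma gaussPDF_mul_exp (a x : ℝ) :
    gaussianPDFReal 0 1 x * rexp (a * x) =
      (Real.sqrt (2 * π))⁻¹ * rexp (a ^ 2 / 2) * rexp (-(1/2) * (x - a) ^ 2) := by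
  simp only [gaussianPDFReal, NNReal.coe_one, mul_one, sub_zero]
  rw [mul_assoc, mul_assoc, ← Real.exp_add, ← Real.exp_add]
  ring_nf

lemma integrable_pdf_exp (a : ℝ) :
    Integrable (fun x => gaussianPDFReal 0 1 x * rexp (a * x)) := by
  simp only [gaussPDF_mul_exp]
  exact (((integrable_exp_neg_mul_sq (by norm_num : (0:ℝ) < 1/2)).comp_sub_right a).const_mul _)

lemma integrable_exp_mul_gauss (a : ℝ) :
    Integrable (fun x => rexp (a * x)) (gaussianReal 0 1) := by
  rw [gaussianReal_of_var_ne_zero 0 one_ne_zero]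
  have hm : Measurable fun x => (gaussianPDFReal 0 1 x).toNNReal :=
    (measurable_gaussianPDFReal 0 1).real_toNNReal
  rw [show (gaussianPDF 0 1) = fun x => ((gaussianPDFReal 0 1 x).toNNReal : ℝ≥0∞) from rfl]
  rw [integrable_withDensity_iff_integrable_smul hm]
  have h : (fun x : ℝ => (gaussianPDFReal 0 1 x).toNNReal • rexp (a * x))
      = fun x => gaussianPDFReal 0 1 x * rexp (a * x) := by
    funext x
    rw [NNReal.smul_def, smul_eq_mul, Real.coe_toNNReal _ (gaussianPDFReal_nonneg 0 1 x)]
  rw [h]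
  exact integrable_pdf_exp a

lemma integral_exp_mul_gauss (a : ℝ) :
    ∫ x, rexp (a * x) ∂(gaussianReal 0 1) = rexp (a ^ 2 / 2) := by
  rw [gaussianReal_of_var_ne_zero 0 one_ne_zero]
  have hm : Measurable fun x => (gaussianPDFReal 0 1 x).toNNReal :=
    (measurable_gaussianPDFReal 0 1).real_toNNReal
  rw [show (gaussianPDF 0 1) = fun x => ((gaussianPDFReal 0 1 x).toNNReal : ℝ≥0∞) from rfl]
  rw [integral_withDensity_eq_integral_smul hm]
  have h : ∀ x : ℝ, (gaussianPDFReal 0 1 x).toNNReal • rexp (a * x)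
      = (Real.sqrt (2 * π))⁻¹ * rexp (a ^ 2 / 2) * rexp (-(1/2) * (x - a) ^ 2) := by
    intro x
    rw [NNReal.smul_def, smul_eq_mul, Real.coe_toNNReal _ (gaussianPDFReal_nonneg 0 1 x),
      gaussPDF_mul_exp]
  simp only [h]
  rw [integral_const_mul, integral_sub_right_eq_self (fun x => rexp (-(1/2) * x ^ 2)) a]
  have : ∫ x : ℝ, rexp (-(1/2) * x ^ 2) = Real.sqrt (2 * π) := by
    rw [integral_gaussian]
    norm_num
    ring
  rw [this, mul_comm, ← mul_assoc, mul_inv_cancel₀ (by positivity), one_mul]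

lemma exp_sum_eq (d : ℕ) (w : Fin d → ℝ) (t : ℝ) (y : Fin d → ℝ) :
    rexp (t * ∑ i, y i * w i) = ∏ i, (fun x => rexp (t * w i * x)) (y i) := by
  rw [← Real.exp_sum, Finset.mul_sum]
  congr 1
  exact Finset.sum_congr rfl fun i _ => by ring

lemma integrable_exp_sum (d : ℕ) (w : Fin d → ℝ) (t : ℝ) :
    Integrable (fun y => rexp (t * ∑ i, y i * w i)) (stdGaussian d) := by
  letI : MeasureSpace ℝ := ⟨gaussianReal 0 1⟩
  haveI : SigmaFinite (volume : Measure ℝ) :=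
    (inferInstance : SigmaFinite (gaussianReal 0 1))
  have h1 : stdGaussian d = (volume : Measure (Fin d → ℝ)) := rfl
  rw [h1]
  simp only [exp_sum_eq d w t]
  exact Integrable.fintype_prod (f := fun i x => rexp (t * w i * x))
    fun i => integrable_exp_mul_gauss (t * w i)

lemma integral_exp_sum (d : ℕ) (w : Fin d → ℝ) (t : ℝ) :
    ∫ y, rexp (t * ∑ i, y i * w i) ∂(stdGaussian d)
      = rexp (t ^ 2 * (∑ i, w i ^ 2) / 2) := by
  letI : MeasureSpace ℝ := ⟨gaussianReal 0 1⟩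
  haveI : SigmaFinite (volume : Measure ℝ) :=
    (inferInstance : SigmaFinite (gaussianReal 0 1))
  have h1 : stdGaussian d = (volume : Measure (Fin d → ℝ)) := rfl
  rw [h1]
  simp only [exp_sum_eq d w t]
  rw [volume_pi, MeasureTheory.integral_fintype_prod_eq_prod (fun i x => rexp (t * w i * x))]
  have : ∀ i : Fin d, ∫ x : ℝ, rexp (t * w i * x) = rexp ((t * w i) ^ 2 / 2) :=
    fun i => integral_exp_mul_gauss (t * w i)
  simp only [this]
  rw [← Real.exp_sum]
  congr 1
  rw [Finset.mul_sum, Finset.sum_div]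
  exact Finset.sum_congr rfl fun i _ => by ring

set_option maxHeartbeats 1000000 in
lemma chernoff (d : ℕ) (w : Fin d → ℝ) (hw : ∑ i, w i ^ 2 ≤ 1) (t : ℝ) (ht : 0 ≤ t) :
    stdGaussian d {y | t ≤ ∑ i, y i * w i} ≤ ENNReal.ofReal (rexp (-(t ^ 2) / 2)) := by
  haveI : IsFiniteMeasure (stdGaussian d) := inferInstance
  have h : (stdGaussian d {y | t ≤ ∑ i, y i * w i}).toReal ≤
      rexp (-t * t) * mgf (fun y => ∑ i, y i * w i) (stdGaussian d) t :=
    measure_ge_le_exp_mul_mgf t ht (integrable_exp_sum d w t)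
  rw [mgf, integral_exp_sum d w t, ← Real.exp_add] at h
  have h2 : rexp (-t * t + t ^ 2 * (∑ i, w i ^ 2) / 2) ≤ rexp (-(t ^ 2) / 2) := by
    apply Real.exp_le_exp.2
    nlinarith [sq_nonneg t]
  refine (ENNReal.le_ofReal_iff_toReal_le (measure_ne_top _ _) (Real.exp_nonneg _)).2 ?_
  exact h.trans h2

lemma chernoff_abs (d : ℕ) (w : Fin d → ℝ) (hw : ∑ i, w i ^ 2 ≤ 1) (t : ℝ) (ht : 0 ≤ t) :
    stdGaussian d {y | t ≤ |∑ i, y i * w i|} ≤ ENNReal.ofReal (2 * rexp (-(t ^ 2) / 2)) := by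
  have hsub : {y : Fin d → ℝ | t ≤ |∑ i, y i * w i|} ⊆
      {y | t ≤ ∑ i, y i * w i} ∪ {y | t ≤ ∑ i, y i * (-w) i} := by
    intro y hy
    simp only [Set.mem_setOf_eq] at hy ⊢
    rcases le_abs.1 hy with h | h
    · exact Or.inl h
    · refine Or.inr ?_
      simpa [Finset.sum_neg_distrib, mul_neg, ← Finset.sum_neg_distrib] using h
  refine (measure_mono hsub).trans ((measure_union_le _ _).trans ?_)
  have hw' : ∑ i, (-w) i ^ 2 ≤ 1 := by simpa using hw
  refine (add_le_add (chernoff d w hw t ht) (chernoff d (-w) hw' t ht)).trans ?_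
  rw [← ENNReal.ofReal_add (Real.exp_nonneg _) ?_]
  · exact le_of_eq (by rw [two_mul])
  · exact Real.exp_nonneg _

lemma gauss_pdf_le (x : ℝ) : gaussianPDFReal 0 1 x ≤ 2/5 := by
  have hpi : (5/2 : ℝ) ≤ Real.sqrt (2 * π) := by
    rw [show (5/2 : ℝ) = Real.sqrt ((5/2)^2) from (Real.sqrt_sq (by norm_num)).symm]
    apply Real.sqrt_le_sqrt
    nlinarith [Real.pi_gt_d6]
  have h2 : (Real.sqrt (2 * π))⁻¹ ≤ 2/5 := by
    rw [show (2/5 : ℝ) = (5/2 : ℝ)⁻¹ by norm_num]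
    exact inv_anti₀ (by norm_num) hpi
  calc gaussianPDFReal 0 1 x = (Real.sqrt (2 * π))⁻¹ * rexp (-(x - 0)^2 / (2 * 1)) := by
        simp [gaussianPDFReal]
    _ ≤ (Real.sqrt (2 * π))⁻¹ * 1 := by
        apply mul_le_mul_of_nonneg_left _ (by positivity)
        exact Real.exp_le_one_iff.2 (by nlinarith [sq_nonneg (x - 0)])
    _ ≤ 2/5 := by rw [mul_one]; exact h2

lemma gauss_interval : gaussianReal 0 1 {x : ℝ | |x| ≤ 1/8} ≤ ENNReal.ofReal (1/8) := by
  have hS : {x : ℝ | |x| ≤ 1/8} = Set.Icc (-(1/8)) (1/8) := by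
    ext x; simp [abs_le]
  rw [gaussianReal_apply 0 one_ne_zero, hS]
  calc ∫⁻ x in Set.Icc (-(1/8) : ℝ) (1/8), gaussianPDF 0 1 x
      ≤ ∫⁻ _ in Set.Icc (-(1/8) : ℝ) (1/8), ENNReal.ofReal (2/5) := by
        apply setLIntegral_mono measurable_const
        intro x _
        exact ENNReal.ofReal_le_ofReal (gauss_pdf_le x)
    _ = ENNReal.ofReal (2/5) * volume (Set.Icc (-(1/8) : ℝ) (1/8)) := setLIntegral_const _ _
    _ ≤ ENNReal.ofReal (1/8) := by
        rw [Real.volume_Icc, ← ENNReal.ofReal_mul (by norm_num)]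
        exact ENNReal.ofReal_le_ofReal (by norm_num)

lemma coord_bound (d : ℕ) :
    stdGaussian (d + 1) {y | |y 0| ≤ 1/8} ≤ ENNReal.ofReal (1/8) := by
  have hset : {y : Fin (d+1) → ℝ | |y 0| ≤ 1/8} =
      Set.pi Set.univ (fun i => if i = 0 then {x : ℝ | |x| ≤ 1/8} else Set.univ) := by
    ext y
    simp only [Set.mem_setOf_eq, Set.mem_pi, Set.mem_univ, forall_true_left]
    constructor
    · intro h i
      by_cases hi : i = 0
      · subst hi; simpa using h
      · simp [hi]
    · intro h
      have := h 0
      simpa using this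
  rw [hset, _root_.stdGaussian, Measure.pi_pi]
  have : ∀ i : Fin (d+1), gaussianReal 0 1 (if i = 0 then {x : ℝ | |x| ≤ 1/8} else Set.univ)
      = if i = 0 then gaussianReal 0 1 {x : ℝ | |x| ≤ 1/8} else 1 := by
    intro i; by_cases hi : i = 0 <;> simp [hi]
  rw [Finset.prod_congr rfl fun i _ => this i, Finset.prod_ite_eq' Finset.univ 0]
  simpa using gauss_interval

end Stmt16Aux

open Stmt16Aux Real in
open scoped ENNReal NNReal in
/-- Initialization lemma: there is an absolute constant `C > 0` such that for any finite set
`W` of at most `N` vectors of norm at most 1 (`N ≥ 40`), any `s₁ ≥ C √(log N)` and any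
`0 ≤ c ≤ s₁/1200`, a standard Gaussian `y` satisfies, with probability at least `3/4`,
`s₁ |y₁| > max_{w ∈ W} |⟨y, w⟩| + c + s₁/1000`.  (The ambient dimension is `d + 1 ≥ 1`.) -/
theorem stmt16 :
    ∃ C : ℝ, 0 < C ∧
      ∀ (d : ℕ) (W : Finset (Fin (d + 1) → ℝ)) (hW : W.Nonempty),
        (∀ w ∈ W, Real.sqrt (∑ i, w i ^ 2) ≤ 1) →
        ∀ N : ℕ, W.card ≤ N → 40 ≤ N →
        ∀ s₁ c : ℝ, C * Real.sqrt (Real.log N) ≤ s₁ → 0 ≤ c → c ≤ s₁ / 1200 →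
        ENNReal.ofReal (3 / 4) ≤
          stdGaussian (d + 1)
            {y | (W.sup' hW fun w => |∑ i, y i * w i|) + c + s₁ / 1000 < s₁ * |y 0|} := by
  refine ⟨20, by norm_num, ?_⟩
  intro d W hW hnorm N hcard hN s₁ c hs₁ hc0 hc
  set μ := stdGaussian (d + 1) with hμ
  haveI : IsProbabilityMeasure μ := inferInstance
  -- basic positivity facts
  have hN40 : (40 : ℝ) ≤ (N : ℝ) := by exact_mod_cast hN
  have hNpos : (0 : ℝ) < N := by linarith
  have hlogpos : 0 < Real.log N := Real.log_pos (by linarith)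
  have hsqrt_pos : 0 < Real.sqrt (Real.log N) := Real.sqrt_pos.2 hlogpos
  have hs₁pos : 0 < s₁ := lt_of_lt_of_le (by positivity) hs₁
  set t : ℝ := s₁ / 10 with htdef
  have ht : 0 ≤ t := by positivity
  -- tail probability value bound
  have hs₁sq : 400 * Real.log N ≤ s₁ ^ 2 := by
    nlinarith [Real.sq_sqrt hlogpos.le, Real.sqrt_nonneg (Real.log N), hs₁]
  have h16 : Real.log 16 ≤ Real.log N :=
    Real.log_le_log (by norm_num) (by linarith)
  have hlogle : Real.log (16 * N) ≤ s₁ ^ 2 / 200 := by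
    rw [Real.log_mul (by norm_num) (by positivity)]
    linarith
  have hval : 2 * rexp (-(t ^ 2) / 2) ≤ 1 / (8 * N) := by
    have hexp : rexp (-(t ^ 2) / 2) ≤ (16 * (N : ℝ))⁻¹ := by
      rw [← Real.exp_log (show (0 : ℝ) < (16 * (N : ℝ))⁻¹ by positivity), Real.log_inv]
      apply Real.exp_le_exp.2
      have htt : t ^ 2 / 2 = s₁ ^ 2 / 200 := by rw [htdef]; ring
      linarith
    have : 2 * rexp (-(t ^ 2) / 2) ≤ 2 * (16 * (N : ℝ))⁻¹ := by linarith
    refine this.trans (le_of_eq ?_)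
    field_simp
    ring
  -- the event
  set E := {y : Fin (d + 1) → ℝ |
    (W.sup' hW fun w => |∑ i, y i * w i|) + c + s₁ / 1000 < s₁ * |y 0|} with hE
  have hZmeas : ∀ w : Fin (d + 1) → ℝ,
      Measurable fun y : Fin (d + 1) → ℝ => |∑ i, y i * w i| := by
    intro w
    exact (Finset.measurable_sum Finset.univ
      fun i _ => by fun_prop).abs
  have hsupm : Measurable fun y : Fin (d + 1) → ℝ =>
      W.sup' hW fun w => |∑ i, y i * w i| := by
    have h := Finset.measurable_sup'
      (f := fun (w : Fin (d + 1) → ℝ) (y : Fin (d + 1) → ℝ) => |∑ i, y i * w i|)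
      hW (fun w _ => hZmeas w)
    have heq : (fun y : Fin (d + 1) → ℝ => W.sup' hW fun w => |∑ i, y i * w i|)
        = W.sup' hW (fun (w : Fin (d + 1) → ℝ) (y : Fin (d + 1) → ℝ) => |∑ i, y i * w i|) := by
      funext y
      rw [Finset.sup'_apply]
    rw [heq]
    exact h
  have hEmeas : MeasurableSet E := by
    apply measurableSet_lt
    · exact (hsupm.add_const c).add_const _
    · exact measurable_const.mul ((measurable_pi_apply 0).abs)
  -- complement inclusion
  have hsub : Eᶜ ⊆ {y : Fin (d + 1) → ℝ | |y 0| ≤ 1/8} ∪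
      ⋃ w ∈ W, {y : Fin (d + 1) → ℝ | t ≤ |∑ i, y i * w i|} := by
    intro y hy
    by_contra hcon
    simp only [Set.mem_union, Set.mem_setOf_eq, Set.mem_iUnion, not_or, not_exists,
      not_le, exists_prop] at hcon
    obtain ⟨h0, hw⟩ := hcon
    apply hy
    show (W.sup' hW fun w => |∑ i, y i * w i|) + c + s₁ / 1000 < s₁ * |y 0|
    have hsup : (W.sup' hW fun w => |∑ i, y i * w i|) < t :=
      (Finset.sup'_lt_iff hW).2 fun w hwW =>
        lt_of_not_ge fun hle => hw w ⟨hwW, hle⟩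
    have h8 : s₁ * (1/8) < s₁ * |y 0| := by
      apply mul_lt_mul_of_pos_left h0 hs₁pos
    have : t + s₁ / 1200 + s₁ / 1000 ≤ s₁ * (1/8) := by
      rw [htdef]; linarith
    linarith
  -- measure of the union part
  have hB : μ (⋃ w ∈ W, {y : Fin (d + 1) → ℝ | t ≤ |∑ i, y i * w i|}) ≤
      ENNReal.ofReal (1/8) := by
    refine (measure_biUnion_finset_le W _).trans ?_
    have heach : ∀ w ∈ W, μ {y : Fin (d + 1) → ℝ | t ≤ |∑ i, y i * w i|} ≤
        ENNReal.ofReal (1 / (8 * N)) := by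
      intro w hwW
      have hw1 : ∑ i, w i ^ 2 ≤ 1 := by
        have h1 := hnorm w hwW
        have h2 := Real.sq_sqrt (show (0 : ℝ) ≤ ∑ i, w i ^ 2 by positivity)
        nlinarith [Real.sqrt_nonneg (∑ i, w i ^ 2)]
      exact (chernoff_abs (d + 1) w hw1 t ht).trans (ENNReal.ofReal_le_ofReal hval)
    calc ∑ w ∈ W, μ {y : Fin (d + 1) → ℝ | t ≤ |∑ i, y i * w i|}
        ≤ ∑ w' ∈ W, ENNReal.ofReal (1 / (8 * N)) := Finset.sum_le_sum heach
      _ = (W.card : ℝ≥0∞) * ENNReal.ofReal (1 / (8 * N)) := by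
          rw [Finset.sum_const, nsmul_eq_mul]
      _ ≤ (N : ℝ≥0∞) * ENNReal.ofReal (1 / (8 * N)) := by
          apply mul_le_mul_left
          exact_mod_cast Nat.cast_le.2 hcard
      _ ≤ ENNReal.ofReal (1/8) := by
          rw [← ENNReal.ofReal_natCast N, ← ENNReal.ofReal_mul (by positivity)]
          apply ENNReal.ofReal_le_ofReal
          rw [mul_one_div, div_le_div_iff₀ (by positivity) (by norm_num)]
          nlinarith
  -- total complement bound
  have hEc : μ Eᶜ ≤ ENNReal.ofReal (1/4) := by
    refine (measure_mono hsub).trans ((measure_union_le _ _).trans ?_)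
    refine (add_le_add (coord_bound d) hB).trans ?_
    rw [← ENNReal.ofReal_add (by norm_num) (by norm_num)]
    norm_num
  -- conclude
  have h1 : μ E = 1 - μ Eᶜ := by
    have := prob_compl_eq_one_sub (μ := μ) hEmeas.compl
    rwa [compl_compl] at this
  have h2 : ENNReal.ofReal (3/4) = 1 - ENNReal.ofReal (1/4) := by
    rw [← ENNReal.ofReal_one, ← ENNReal.ofReal_sub _ (by norm_num)]
    norm_num
  calc ENNReal.ofReal (3/4) = 1 - ENNReal.ofReal (1/4) := h2
    _ ≤ 1 - μ Eᶜ := tsub_le_tsub_left hEc 1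
    _ = μ E := h1.symm
end
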